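/- arXiv:1006.5205 — 2 statements merged into one kernel-verified Lean document; each statement's English description precedes it below -/
import Mathlib

section
/- Proposition: Let G be an abelian group, φ an injective endomorphism of G, and S = (x_n)_{n∈ℕ} a string of φ. If there exist positive integers k < h such that x_h ∈ x_0 + ⟨x_1, …, x_k⟩ or x_h ∈ −x_0 + ⟨x_1, …, x_k⟩ (where ⟨x_1, …, x_k⟩ is the subgroup generated by x_1, …, x_k), then there exists a sequence (a_j)_{j∈ℕ} of pairwise distinct integers such that the sequences a_j·S = (a_j x_n)_{n∈ℕ} are pairwise disjoint strings of φ. -/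
/-!
The relation has unit coefficient at `x 0`, so it writes `x h` in terms of `x 0, …, x (h-1)` and
`x 0` in terms of `x 1, …, x h`. Pushed up the string (which needs `φ` injective), it shows that the
span `V` of the string is finitely generated and is spanned by each of its tails.

If `a • x m = b • x (m + t)`, applying `φ^m` and pushing back up gives `a • x i = b • x (i + t)` for
all `i`. In the free module `V ⧸ torsion` both tails `(x i)` and `(x (i + t))` span everything, so
`a ∣ b` and `b ∣ a`; hence `a = ±b` and the image of the string there is periodic. Since the torsion
of `V` is finite, the string would then take only finitely many values, unless `a = b` and `t = 0`.
So `a_j = j + 1` works.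
-/

/-- A string of a self-map `f` is a sequence of pairwise distinct elements
with `f (x (n+1)) = x n` for all `n`. -/
def IsString {G : Type*} (f : G → G) (x : ℕ → G) : Prop :=
  Function.Injective x ∧ ∀ n : ℕ, f (x (n + 1)) = x n

open Function Set Submodule

def IsBackwardOrbit {α : Type*} (f : α → α) (u : ℕ → α) : Prop :=
  ∀ n, f (u (n + 1)) = u n

namespace IsBackwardOrbit

section Function

variable {α : Type*} {f : α → α} {u v : ℕ → α}

theorem iterate_apply (hu : IsBackwardOrbit f u) (m n : ℕ) : f^[m] (u (n + m)) = u n := by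
  induction m with
  | zero => rfl
  | succ m ih => rw [iterate_succ_apply, ← Nat.add_assoc, hu, ih]

theorem shift (hu : IsBackwardOrbit f u) (s : ℕ) : IsBackwardOrbit f fun n => u (n + s) :=
  fun n => by simp only [Nat.add_right_comm n 1 s, hu (n + s)]

theorem eq_of_apply_eq (hu : IsBackwardOrbit f u) (hv : IsBackwardOrbit f v)
    (hf : Injective f) {m : ℕ} (h : u m = v m) : u = v := by
  have h0 : u 0 = v 0 := by
    rw [← hu.iterate_apply m 0, ← hv.iterate_apply m 0, Nat.zero_add, h]
  funext n
  apply hf.iterate n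
  have hun := hu.iterate_apply n 0
  have hvn := hv.iterate_apply n 0
  rw [Nat.zero_add] at hun hvn
  rw [hun, hvn, h0]

end Function

section Module

variable {R M : Type*} [Semiring R] [AddCommMonoid M] [Module R M] {φ : M →ₗ[R] M} {u : ℕ → M}

theorem smul (hu : IsBackwardOrbit φ u) (c : R) : IsBackwardOrbit φ (c • u) :=
  fun n => by simp only [Pi.smul_apply, map_smul, hu n]

theorem linearCombination (hu : IsBackwardOrbit φ u) (l : ℕ →₀ R) :
    IsBackwardOrbit φ fun n => Finsupp.linearCombination R (fun i => u (i + n)) l := by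
  intro n
  rw [Finsupp.apply_linearCombination]
  congr 2 with i
  exact hu (i + n)

theorem mem_span_image_add (hφ : Injective φ) (hu : IsBackwardOrbit φ u) {m : ℕ} {s : Set ℕ}
    (h : u m ∈ span R (u '' s)) (n : ℕ) : u (n + m) ∈ span R ((fun i => u (i + n)) '' s) := by
  obtain ⟨l, hl, hlu⟩ := (Finsupp.mem_span_image_iff_linearCombination R).1 h
  have horbit := (hu.shift m).eq_of_apply_eq (hu.linearCombination l) hφ (m := 0)
    (by simpa using hlu.symm)
  exact (Finsupp.mem_span_image_iff_linearCombination R).2 ⟨l, hl, (congrFun horbit n).symm⟩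

theorem mem_span_image_Ioi (hφ : Injective φ) (hu : IsBackwardOrbit φ u)
    (h : u 0 ∈ span R (u '' Ioi 0)) (n : ℕ) : u n ∈ span R (u '' Ioi n) := by
  refine span_mono ?_ (hu.mem_span_image_add hφ h n)
  rintro _ ⟨i, hi, rfl⟩
  exact ⟨i + n, by simp only [mem_Ioi] at hi ⊢; omega, rfl⟩

theorem mem_span_image_Iio (hφ : Injective φ) (hu : IsBackwardOrbit φ u) {N : ℕ}
    (h : u N ∈ span R (u '' Iio N)) {n : ℕ} (hn : N ≤ n) : u n ∈ span R (u '' Iio n) := by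
  obtain ⟨n, rfl⟩ := Nat.exists_eq_add_of_le' hn
  refine span_mono ?_ (hu.mem_span_image_add hφ h n)
  rintro _ ⟨i, hi, rfl⟩
  exact ⟨i + n, by simp only [mem_Iio] at hi ⊢; omega, rfl⟩

end Module

end IsBackwardOrbit

section SpanOfSequence

variable {R M : Type*} [Semiring R] [AddCommMonoid M] [Module R M] {u : ℕ → M}

theorem span_range_add_eq_span_range (h : ∀ n, u n ∈ span R (u '' Ioi n)) (s : ℕ) :
    span R (range fun n => u (n + s)) = span R (range u) := by
  induction s with
  | zero => simp
  | succ s ih =>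
    refine le_antisymm (span_mono (range_subset_iff.2 fun n => mem_range_self _)) ?_
    rw [← ih, span_le, range_subset_iff]
    rintro (_ | n)
    · refine span_mono ?_ (by simpa using h s)
      rintro _ ⟨i, hi, rfl⟩
      exact ⟨i - (s + 1), by simp only [Nat.sub_add_cancel (Nat.succ_le_of_lt hi)]⟩
    · exact subset_span ⟨n, by rw [Nat.add_right_comm, Nat.add_assoc]⟩

theorem span_range_eq_span_image_Iio {N : ℕ} (h : ∀ n, N ≤ n → u n ∈ span R (u '' Iio n)) :
    span R (range u) = span R (u '' Iio N) := by
  refine le_antisymm (span_le.2 (range_subset_iff.2 fun n => ?_))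
    (span_mono (image_subset_range _ _))
  induction n using Nat.strong_induction_on with
  | _ n ih =>
    rcases lt_or_ge n N with hn | hn
    · exact subset_span ⟨n, hn, rfl⟩
    · refine span_le.2 ?_ (h n hn)
      rintro _ ⟨i, hi, rfl⟩
      exact ih i hi

end SpanOfSequence

theorem mem_span_insert_of_sub_mem_or_add_mem {R M : Type*} [Ring R] [AddCommGroup M] [Module R M]
    {s : Set M} {y z : M} (h : y - z ∈ span R s ∨ y + z ∈ span R s) :
    y ∈ span R (insert z s) ∧ z ∈ span R (insert y s) := by
  simp only [mem_span_insert]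
  rcases h with h | h
  · exact ⟨⟨1, _, h, by simp⟩, ⟨1, _, neg_mem h, by simp⟩⟩
  · exact ⟨⟨-1, _, h, by simp⟩, ⟨-1, _, h, by simp⟩⟩

theorem exists_smul_eq_smul_of_span_range_eq_top {R M ι : Type*} [CommSemiring R] [AddCommMonoid M]
    [Module R M] {v w : ι → M} {a b : R} (hv : span R (range v) = ⊤)
    (h : ∀ i, a • v i = b • w i) (y : M) : ∃ y', a • y = b • y' := by
  induction (hv ▸ mem_top : y ∈ span R (range v)) using span_induction with
  | mem _ hy => obtain ⟨i, rfl⟩ := hy; exact ⟨w i, h i⟩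
  | zero => exact ⟨0, by simp⟩
  | add _ _ _ _ h₁ h₂ =>
    obtain ⟨y₁, hy₁⟩ := h₁
    obtain ⟨y₂, hy₂⟩ := h₂
    exact ⟨y₁ + y₂, by rw [smul_add, smul_add, hy₁, hy₂]⟩
  | smul r _ _ h =>
    obtain ⟨y', hy'⟩ := h
    exact ⟨r • y', by rw [smul_comm, hy', smul_comm]⟩

theorem dvd_of_forall_exists_smul_eq_smul {R M : Type*} [CommRing R] [AddCommGroup M] [Module R M]
    [Module.Free R M] [Nontrivial M] {a b : R} (h : ∀ y : M, ∃ y', a • y = b • y') : b ∣ a := by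
  let B := Module.Free.chooseBasis R M
  obtain ⟨i⟩ := B.index_nonempty
  obtain ⟨y', hy'⟩ := h (B i)
  refine ⟨B.repr y' i, ?_⟩
  simpa using congrArg (fun y => B.repr y i) hy'

theorem periodic_of_smul_eq_smul_add {V : Type*} [AddCommGroup V] [Module.Finite ℤ V]
    [Module.IsTorsionFree ℤ V] {v : ℕ → V} {a b : ℤ} {t : ℕ} (h₀ : span ℤ (range v) = ⊤)
    (hₜ : span ℤ (range fun n => v (n + t)) = ⊤) (ha : a ≠ 0) (h : ∀ n, a • v n = b • v (n + t)) :
    Periodic v (2 * t) := by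
  cases subsingleton_or_nontrivial V
  · exact fun _ => Subsingleton.elim _ _
  have : Module.Free ℤ V := Module.free_of_finite_type_torsion_free'
  have hba : b ∣ a :=
    dvd_of_forall_exists_smul_eq_smul (exists_smul_eq_smul_of_span_range_eq_top h₀ h)
  have hab : a ∣ b := dvd_of_forall_exists_smul_eq_smul
    (exists_smul_eq_smul_of_span_range_eq_top hₜ fun n => (h n).symm)
  have hb : b ≠ 0 := by rintro rfl; exact ha (zero_dvd_iff.1 hba)
  rcases Int.natAbs_eq_natAbs_iff.1 (Int.natAbs_eq_of_dvd_dvd hab hba) with rfl | rfl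
  · have hper : Periodic v t := fun n => (smul_right_injective V hb (h n)).symm
    simpa using hper.nat_mul 2
  · have hneg : ∀ n, v (n + t) = -v n := fun n =>
      smul_right_injective V hb (by simpa using (h n).symm)
    intro n
    rw [two_mul, ← Nat.add_assoc, hneg, hneg, neg_neg]

theorem finite_range_of_periodic_mkQ {R V : Type*} [Ring R] [AddCommGroup V] [Module R V]
    (T : Submodule R V) [Finite T] {y : ℕ → V} {p : ℕ} (hp : 0 < p)
    (h : Periodic (fun n => T.mkQ (y n)) p) : (range y).Finite := by
  refine ((finite_Iio p).biUnion fun i _ => (toFinite T).image (y i + ·)).subset ?_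
  rintro _ ⟨n, rfl⟩
  refine mem_biUnion (Nat.mod_lt n hp) ⟨y n - y (n % p), ?_, add_sub_cancel _ _⟩
  exact (Submodule.Quotient.eq T).1 (h.map_mod_nat n).symm

theorem eq_and_eq_zero_of_smul_eq_smul_add {V : Type*} [AddCommGroup V] [Module.Finite ℤ V]
    {y : ℕ → V} (hy : Injective y) (hspan : ∀ s, span ℤ (range fun n => y (n + s)) = ⊤)
    {a b : ℤ} {t : ℕ} (ha : a ≠ 0) (h : ∀ n, a • y n = b • y (n + t)) : a = b ∧ t = 0 := by
  let T := torsion ℤ V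
  have : Module.Finite ℤ T := Module.Finite.iff_fg.2 (IsNoetherian.noetherian T)
  have : Finite T := Module.finite_of_fg_torsion T torsion_isTorsion
  by_contra hne
  suffices ∃ p, 0 < p ∧ Periodic (fun n => T.mkQ (y n)) p by
    obtain ⟨p, hp, hper⟩ := this
    exact infinite_range_of_injective hy (finite_range_of_periodic_mkQ T hp hper)
  rcases Nat.eq_zero_or_pos t with rfl | ht
  · have hab : a - b ≠ 0 := sub_ne_zero.2 fun hab => hne ⟨hab, rfl⟩
    have hT : ∀ n, y n ∈ T := fun n =>
      ⟨⟨a - b, mem_nonZeroDivisors_of_ne_zero hab⟩, by simp [sub_smul, h n]⟩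
    refine ⟨1, one_pos, fun n => ?_⟩
    simp only [mkQ_apply, (Quotient.mk_eq_zero T).2 (hT _)]
  · have hspanT : ∀ s, span ℤ (range fun n => T.mkQ (y (n + s))) = ⊤ := fun s => by
      rw [range_comp' T.mkQ (fun n => y (n + s)), ← map_span, hspan, Submodule.map_top, range_mkQ]
    refine ⟨2 * t, by omega, periodic_of_smul_eq_smul_add (hspanT 0) (hspanT t) ha (b := b) ?_⟩
    simp only [← map_zsmul, h, implies_true]

theorem eq_and_eq_zero_of_smul_eq_smul_add_of_fg {G : Type*} [AddCommGroup G] {x : ℕ → G}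
    (hx : Injective x) (hfg : (span ℤ (range x)).FG)
    (htail : ∀ s, span ℤ (range fun n => x (n + s)) = span ℤ (range x))
    {a b : ℤ} {t : ℕ} (ha : a ≠ 0) (h : ∀ n, a • x n = b • x (n + t)) : a = b ∧ t = 0 := by
  let V := span ℤ (range x)
  have : Module.Finite ℤ V := Module.Finite.iff_fg.2 hfg
  let y : ℕ → V := fun n => ⟨x n, subset_span (mem_range_self n)⟩
  have hspan : ∀ s, span ℤ (range fun n => y (n + s)) = ⊤ := fun s => by
    apply map_injective_of_injective V.injective_subtype
    rw [map_span, ← range_comp, Submodule.map_top, range_subtype]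
    exact htail s
  exact eq_and_eq_zero_of_smul_eq_smul_add (fun m n hmn => hx (congrArg Subtype.val hmn)) hspan ha
    fun n => Subtype.ext (h n)

theorem IsBackwardOrbit.eq_and_eq_of_smul_eq_smul {G : Type*} [AddCommGroup G] {φ : G →ₗ[ℤ] G}
    {x : ℕ → G} (hx : IsBackwardOrbit φ x) (hφ : Injective φ) (hinj : Injective x)
    (hfg : (span ℤ (range x)).FG)
    (htail : ∀ s, span ℤ (range fun n => x (n + s)) = span ℤ (range x))
    {a b : ℤ} (ha : a ≠ 0) (hb : b ≠ 0) {m n : ℕ} (h : a • x m = b • x n) : a = b ∧ m = n := by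
  wlog hmn : m ≤ n generalizing a b m n
  · obtain ⟨hba, hnm⟩ := this hb ha h.symm (by omega)
    exact ⟨hba.symm, hnm.symm⟩
  obtain ⟨t, rfl⟩ := Nat.exists_eq_add_of_le hmn
  have horbit := (hx.smul a).eq_of_apply_eq ((hx.shift t).smul b) hφ (m := m)
    (by simpa [Nat.add_comm] using h)
  obtain ⟨rfl, rfl⟩ := eq_and_eq_zero_of_smul_eq_smul_add_of_fg hinj hfg htail ha (congrFun horbit)
  exact ⟨rfl, rfl⟩

theorem fan_from_relation_general {G : Type*} [AddCommGroup G] (φ : G →+ G)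
    (hφ : Function.Injective φ) (x : ℕ → G) (hx : IsString (⇑φ) x)
    (k h : ℕ) (hkh : k < h)
    (hrel : x h - x 0 ∈ AddSubgroup.closure (x '' Set.Icc 1 k) ∨
      x h + x 0 ∈ AddSubgroup.closure (x '' Set.Icc 1 k)) :
    ∃ a : ℕ → ℤ, Function.Injective a ∧
      (∀ j : ℕ, IsString (⇑φ) (fun n => a j • x n)) ∧
      Pairwise fun i j =>
        Disjoint (Set.range fun n => a i • x n) (Set.range fun n => a j • x n) := by
  have horb : IsBackwardOrbit φ.toIntLinearMap x := hx.2
  simp only [← span_int_eq_addSubgroupClosure, mem_toAddSubgroup] at hrel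
  obtain ⟨hh, h0⟩ := mem_span_insert_of_sub_mem_or_add_mem hrel
  have h0' : x 0 ∈ span ℤ (x '' Ioi 0) := by
    refine span_mono ?_ h0
    rw [← image_insert_eq]
    exact image_mono fun i hi => by simp only [mem_insert_iff, mem_Icc, mem_Ioi] at hi ⊢; omega
  have hh' : x h ∈ span ℤ (x '' Iio h) := by
    refine span_mono ?_ hh
    rw [← image_insert_eq]
    exact image_mono fun i hi => by simp only [mem_insert_iff, mem_Icc, mem_Iio] at hi ⊢; omega
  have hfg : (span ℤ (range x)).FG := by
    rw [span_range_eq_span_image_Iio fun n => horb.mem_span_image_Iio hφ hh']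
    exact fg_span ((finite_Iio h).image x)
  have htail := span_range_add_eq_span_range (horb.mem_span_image_Ioi hφ h0')
  have key {a b : ℤ} {m n : ℕ} (ha : a ≠ 0) (hb : b ≠ 0) (hab : a • x m = b • x n) :
      a = b ∧ m = n :=
    horb.eq_and_eq_of_smul_eq_smul hφ hx.1 hfg htail ha hb hab
  have hpos (j : ℕ) : (j + 1 : ℤ) ≠ 0 := by omega
  refine ⟨fun j => j + 1, fun i j hij => by simpa using hij, fun j => ⟨fun m n hmn => ?_, ?_⟩,
    fun i j hij => disjoint_left.2 ?_⟩
  · exact (key (hpos j) (hpos j) hmn).2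
  · exact horb.smul _
  · rintro _ ⟨m, rfl⟩ ⟨n, hn⟩
    exact hij (by simpa using (key (hpos j) (hpos i) hn).1.symm)

theorem fan_from_relation {G : Type*} [AddCommGroup G] (φ : G →+ G)
    (hφ : Function.Injective φ) (x : ℕ → G) (hx : IsString (⇑φ) x)
    (k h : ℕ) (hk : 0 < k) (hkh : k < h)
    (hrel : x h - x 0 ∈ AddSubgroup.closure (x '' Set.Icc 1 k) ∨
      x h + x 0 ∈ AddSubgroup.closure (x '' Set.Icc 1 k)) :
    ∃ a : ℕ → ℤ, Function.Injective a ∧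
      (∀ j : ℕ, IsString (⇑φ) (fun n => a j • x n)) ∧
      Pairwise fun i j =>
        Disjoint (Set.range fun n => a i • x n) (Set.range fun n => a j • x n) :=
  fan_from_relation_general φ hφ x hx k h hkh hrel
end

section
/- Theorem: Let G be an abelian group, p a prime, and μ_p : G → G the multiplication-by-p endomorphism, μ_p(x) = p x. Then μ_p admits no string if and only if d_p(G) ⊆ t(G) and d_p(t_p(G)) = 0; equivalently, μ_p admits a string if and only if the largest p-divisible subgroup of G contains a non-torsion element or the p-primary component of G has a nonzero p-divisible subgroup. -/
/-- The largest `p`-divisible subgroup of `G`: the join of all subgroups `H`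
with `pH = H`. -/
def pDivCore (p : ℕ) (G : Type*) [AddCommGroup G] : AddSubgroup G :=
  sSup {H : AddSubgroup G | (fun y : G => p • y) '' (H : Set G) = (H : Set G)}

open Function Set AddSubgroup

theorem Set.exists_backward_orbit {α : Type*} {f : α → α} {s : Set α} (hs : s ⊆ f '' s)
    {a : α} (ha : a ∈ s) :
    ∃ x : ℕ → α, x 0 = a ∧ (∀ n, x n ∈ s) ∧ ∀ n, f (x (n + 1)) = x n := by
  choose g hgs hg using fun y : s => hs y.2
  let pre : s → s := fun y => ⟨g y, hgs y⟩
  refine ⟨fun n => pre^[n] ⟨a, ha⟩, rfl, fun n => (pre^[n] ⟨a, ha⟩).2, fun n => ?_⟩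
  simp only [iterate_succ_apply', pre, hg]

section Divisibility

variable {G : Type*} [AddCommGroup G] {p : ℕ}

theorem pDivCore_subset_image :
    (pDivCore p G : Set G) ⊆ (fun y : G => p • y) '' (pDivCore p G : Set G) := by
  have hle : pDivCore p G ≤ (pDivCore p G).map (nsmulAddMonoidHom p) := by
    refine sSup_le fun H hH => ?_
    have hHmap : H.map (nsmulAddMonoidHom p) = H := SetLike.coe_injective hH
    exact hHmap ▸ map_mono (le_sSup hH)
  exact fun y hy => hle hy

theorem le_pDivCore {H : AddSubgroup G}
    (hH : (fun y : G => p • y) '' (H : Set G) = H) : H ≤ pDivCore p G :=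
  le_sSup hH

theorem isOfFinAddOrder_of_nsmul_eq_self {n : ℕ} (hn : 1 < n) {g : G} (h : n • g = g) :
    IsOfFinAddOrder g :=
  isOfFinAddOrder_iff_nsmul_eq_zero.2
    ⟨n - 1, by omega, by rw [sub_nsmul g hn.le, h, one_nsmul, add_neg_cancel]⟩

theorem eq_zero_of_mem_primaryComponent_of_nsmul_eq_self {g : G}
    (hg : g ∈ AddCommMonoid.primaryComponent G p) {n : ℕ} (hn : p ∣ n) (h : n • g = g) :
    g = 0 := by
  obtain ⟨k, hk⟩ := hg
  obtain ⟨c, hc⟩ := pow_dvd_pow_of_dvd hn k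
  have hiter : n ^ k • g = g := by
    have := IsFixedPt.iterate (f := (n • ·)) h k
    rwa [smul_iterate] at this
  rw [← hiter, hc, mul_comm, mul_smul, hk, smul_zero]

theorem closure_subset_primaryComponent {S : Set G}
    (hS : S ⊆ AddCommMonoid.primaryComponent G p) :
    (closure S : Set G) ⊆ AddCommMonoid.primaryComponent G p := fun _ hy =>
  closure_induction (fun _ hy => hS hy) (zero_mem _) (fun _ _ _ _ => add_mem)
    (fun _ _ ⟨k, hk⟩ => ⟨k, by rw [smul_neg, hk, neg_zero]⟩) hy

end Divisibility

section BackwardOrbit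

variable {G : Type*} [AddCommGroup G] {p : ℕ} {x : ℕ → G}

theorem pow_nsmul_add_eq (hx : ∀ n, p • x (n + 1) = x n) (n k : ℕ) :
    p ^ k • x (n + k) = x n := by
  induction k with
  | zero => simp
  | succ k ih => rw [pow_succ, mul_smul, ← add_assoc, hx, ih]

theorem pow_nsmul_eq_zeroth (hx : ∀ n, p • x (n + 1) = x n) (k : ℕ) : p ^ k • x k = x 0 := by
  simpa using pow_nsmul_add_eq hx 0 k

theorem exists_pow_nsmul_eq_self_of_not_injective (hx : ∀ n, p • x (n + 1) = x n)
    (hinj : ¬ Injective x) : ∃ d, 0 < d ∧ p ^ d • x 0 = x 0 := by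
  have key : ∀ a b, a < b → x a = x b → ∃ d, 0 < d ∧ p ^ d • x 0 = x 0 := by
    intro a b hab heq
    obtain ⟨d, rfl⟩ := Nat.exists_eq_add_of_lt hab
    have hperiod : p ^ (d + 1) • x a = x a := by
      have := pow_nsmul_add_eq hx a (d + 1)
      rwa [← add_assoc, ← heq] at this
    exact ⟨d + 1, d.succ_pos, by rw [← pow_nsmul_eq_zeroth hx a, smul_comm, hperiod]⟩
  simp only [Injective, not_forall] at hinj
  obtain ⟨a, b, heq, hne⟩ := hinj
  rcases Nat.lt_or_gt_of_ne hne with hab | hab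
  · exact key a b hab heq
  · exact key b a hab heq.symm

theorem exists_pow_nsmul_eq_self_of_not_exists_isString
    (hno : ¬ ∃ x : ℕ → G, IsString (fun y : G => p • y) x)
    {s : Set G} (hs : s ⊆ (fun y : G => p • y) '' s) {g : G} (hg : g ∈ s) :
    ∃ d, 0 < d ∧ p ^ d • g = g := by
  obtain ⟨x, rfl, -, hx⟩ := s.exists_backward_orbit hs hg
  by_contra hfix
  exact hno ⟨x, not_not.1 fun hinj => hfix (exists_pow_nsmul_eq_self_of_not_injective hx hinj), hx⟩

theorem image_nsmul_closure_range (hx : ∀ n, p • x (n + 1) = x n) :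
    (fun y : G => p • y) '' (closure (range x) : Set G) = closure (range x) := by
  refine (image_subset_iff.2 fun y hy => nsmul_mem hy p).antisymm ?_
  have hle : closure (range x) ≤ (closure (range x)).map (nsmulAddMonoidHom p) := by
    refine closure_le _ |>.2 ?_
    rintro _ ⟨n, rfl⟩
    exact ⟨x (n + 1), subset_closure ⟨n + 1, rfl⟩, hx n⟩
  exact fun y hy => hle hy

theorem eq_of_coprime_nsmul_eq_zero (hx : ∀ n, p • x (n + 1) = x n) {q : ℕ}
    (hpq : p.Coprime q) (hq : q • x q.totient = 0) : x q.totient = x 0 := by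
  have hmod : p ^ q.totient ≡ 1 [MOD addOrderOf (x q.totient)] :=
    (Nat.ModEq.pow_totient hpq).of_dvd (addOrderOf_dvd_of_nsmul_eq_zero hq)
  rw [← nsmul_eq_nsmul_iff_modEq, one_nsmul] at hmod
  rw [← hmod, pow_nsmul_eq_zeroth hx]

theorem closure_range_nsmul_ne_bot (hx : ∀ n, p • x (n + 1) = x n) (hinj : Injective x)
    {q : ℕ} (hpq : p.Coprime q) (hq0 : q ≠ 0) : closure (range fun n => q • x n) ≠ ⊥ := by
  intro hbot
  have hq : q • x q.totient = 0 := by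
    simpa [hbot] using (subset_closure ⟨q.totient, rfl⟩ : _ ∈ closure (range fun n => q • x n))
  exact (Nat.totient_pos.2 (Nat.pos_of_ne_zero hq0)).ne'
    (hinj (eq_of_coprime_nsmul_eq_zero hx hpq hq))

end BackwardOrbit

/-- `μ_p` admits no string iff `d_p(G) ⊆ t(G)` and `d_p(t_p(G)) = 0`, the latter
phrased as: every `p`-divisible subgroup of the `p`-primary component `t_p(G)`
is trivial. -/
theorem no_string_for_mul_p {G : Type*} [AddCommGroup G] (p : ℕ) (hp : p.Prime) :
    (¬ ∃ x : ℕ → G, IsString (fun y : G => p • y) x) ↔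
      ((pDivCore p G : Set G) ⊆ {y : G | ∃ n : ℕ, 0 < n ∧ n • y = 0}) ∧
      (∀ H : AddSubgroup G, (H : Set G) ⊆ {y : G | ∃ n : ℕ, p ^ n • y = 0} →
        (fun y : G => p • y) '' (H : Set G) = (H : Set G) → H = ⊥) := by
  constructor
  · intro hno
    refine ⟨fun g hg => ?_, fun H hprim hdiv => (eq_bot_iff_forall H).2 fun g hg => ?_⟩
    · obtain ⟨d, hd, hfix⟩ := exists_pow_nsmul_eq_self_of_not_exists_isString hno
        pDivCore_subset_image hg
      exact isOfFinAddOrder_iff_nsmul_eq_zero.1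
        (isOfFinAddOrder_of_nsmul_eq_self (Nat.one_lt_pow hd.ne' hp.one_lt) hfix)
    · obtain ⟨d, hd, hfix⟩ := exists_pow_nsmul_eq_self_of_not_exists_isString hno
        hdiv.symm.subset hg
      exact eq_zero_of_mem_primaryComponent_of_nsmul_eq_self (hprim hg) (dvd_pow_self p hd.ne')
        hfix
  · rintro ⟨htors, hprim⟩ ⟨x, hinj, hx⟩
    replace hx : ∀ n, p • x (n + 1) = x n := hx
    obtain ⟨m, hm, hmx⟩ :=
      htors (le_pDivCore (image_nsmul_closure_range hx) (subset_closure ⟨0, rfl⟩))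
    obtain ⟨a, q, hpq, rfl⟩ := Nat.exists_eq_pow_mul_and_not_dvd hm.ne' p hp.ne_one
    refine closure_range_nsmul_ne_bot hx hinj ((Nat.Prime.coprime_iff_not_dvd hp).2 hpq)
      (right_ne_zero_of_mul hm.ne') (hprim _ (closure_subset_primaryComponent ?_)
      (image_nsmul_closure_range fun n => by rw [smul_comm, hx]))
    rintro _ ⟨n, rfl⟩
    exact ⟨a + n, by rw [pow_add, mul_smul, smul_comm (p ^ n), pow_nsmul_eq_zeroth hx,
      ← mul_smul, hmx]⟩
end
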